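/- arXiv:2409.03495 — 5 statements merged into one kernel-verified Lean document; each statement's English description precedes it below -/
import Mathlib

section
/- For every real r, every real α > 0, and every real q with 0 < q ≤ 2, one has (r² + α)^(q/2) ≤ |r|^q + α·(r² + α)^(q/2 − 1). -/
/-!
With `s = r ^ 2 + α`, split `s ^ (q / 2) = r ^ 2 * s ^ (q / 2 - 1) + α * s ^ (q / 2 - 1)`. Since the
exponent `q / 2 - 1` is nonpositive and `r ^ 2 ≤ s`, the first term is at most
`r ^ 2 * (r ^ 2) ^ (q / 2 - 1) = |r| ^ q`.
-/

open Real

lemma mul_rpow_sub_one_le_rpow {x y p : ℝ} (hx : 0 ≤ x) (hxy : x ≤ y) (hp : p ≤ 1) :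
    x * y ^ (p - 1) ≤ x ^ p := by
  rcases hx.eq_or_lt with rfl | hx
  · simpa using rpow_nonneg le_rfl p
  calc x * y ^ (p - 1) ≤ x * x ^ (p - 1) :=
        mul_le_mul_of_nonneg_left (rpow_le_rpow_of_nonpos hx hxy (by linarith)) hx.le
    _ = x ^ p := by rw [rpow_sub_one hx.ne', mul_div_cancel₀ _ hx.ne']

lemma rpow_add_le_rpow_add_mul_rpow_sub_one {x a p : ℝ} (hx : 0 ≤ x) (ha : 0 < a) (hp : p ≤ 1) :
    (x + a) ^ p ≤ x ^ p + a * (x + a) ^ (p - 1) := by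
  have hxa : 0 < x + a := by linarith
  calc (x + a) ^ p = x * (x + a) ^ (p - 1) + a * (x + a) ^ (p - 1) := by
        rw [← add_mul, rpow_sub_one hxa.ne', mul_div_cancel₀ _ hxa.ne']
    _ ≤ x ^ p + a * (x + a) ^ (p - 1) := by
        gcongr
        exact mul_rpow_sub_one_le_rpow hx (by linarith) hp

lemma abs_rpow_eq_sq_rpow_half (r q : ℝ) : |r| ^ q = (r ^ 2) ^ (q / 2) := by
  rw [← sq_abs, ← rpow_natCast, ← rpow_mul (abs_nonneg r)]
  ring_nf

theorem smoothed_le_abs_rpow_add_gap_general (r α q : ℝ) (hα : 0 < α) (hq2 : q ≤ 2) :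
    (r ^ 2 + α) ^ (q / 2) ≤ |r| ^ q + α * (r ^ 2 + α) ^ (q / 2 - 1) := by
  rw [abs_rpow_eq_sq_rpow_half]
  exact rpow_add_le_rpow_add_mul_rpow_sub_one (sq_nonneg r) hα (by linarith)

theorem smoothed_le_abs_rpow_add_gap (r α q : ℝ) (hα : 0 < α) (hq : 0 < q) (hq2 : q ≤ 2) :
    (r ^ 2 + α) ^ (q / 2) ≤ |r| ^ q + α * (r ^ 2 + α) ^ (q / 2 - 1) :=
  smoothed_le_abs_rpow_add_gap_general r α q hα hq2
end

section
/- Let F be a real M×n matrix, W a symmetric positive definite real M×M matrix with FᵀWF invertible, S the positive semidefinite square root of W, C ∈ ℝ^M, and x ∈ ℝ^n. Set x⁺ = (FᵀWF)⁻¹·Fᵀ·W·C and P = I − S·F·(FᵀWF)⁻¹·Fᵀ·S. Then S·(C − F·x⁺) = P·(S·(C − F·x)), where matrices act on vectors by matrix-vector multiplication. -/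
/-! With `W = S * S`, put `A = S * F` and `B = Fᵀ * S`, so that `Fᵀ * W * F = B * A` and
`P = 1 - A * (B * A)⁻¹ * B`. Then `S * (C - F * x⁺) = P * (S * C)` is pure associativity, while
`P * A = 0` because `(B * A)⁻¹` is a left inverse of `B * A`; hence `P` kills `S * F * x`. -/

open Matrix

namespace Matrix

variable {m n R : Type*} [Fintype m] [Fintype n] [DecidableEq m] [DecidableEq n] [CommRing R]

theorem one_sub_mul_nonsing_inv_mul_mul_self {A : Matrix m n R} {B : Matrix n m R}
    (h : IsUnit (B * A)) : (1 - A * (B * A)⁻¹ * B) * A = 0 := by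
  rw [Matrix.sub_mul, Matrix.one_mul, Matrix.mul_assoc _ B,
    nonsing_inv_mul_cancel_right _ A ((isUnit_iff_isUnit_det _).mp h), sub_self]

end Matrix

theorem airls_residual_projection_general {M n : ℕ} (F : Matrix (Fin M) (Fin n) ℝ)
    (W S : Matrix (Fin M) (Fin M) ℝ)
    (hinv : IsUnit (Fᵀ * W * F))
    (hSS : S * S = W)
    (C : Fin M → ℝ) (x : Fin n → ℝ)
    (xplus : Fin n → ℝ) (hxplus : xplus = ((Fᵀ * W * F)⁻¹ * Fᵀ * W).mulVec C)
    (P : Matrix (Fin M) (Fin M) ℝ)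
    (hP : P = (1 : Matrix (Fin M) (Fin M) ℝ) - S * F * (Fᵀ * W * F)⁻¹ * Fᵀ * S) :
    S.mulVec (C - F.mulVec xplus) = P.mulVec (S.mulVec (C - F.mulVec x)) := by
  have hgram : Fᵀ * W * F = (Fᵀ * S) * (S * F) := by simp only [← hSS, Matrix.mul_assoc]
  have hP_oblique : P = 1 - (S * F) * ((Fᵀ * S) * (S * F))⁻¹ * (Fᵀ * S) := by
    simp only [hP, hgram, Matrix.mul_assoc]
  have hPSF : P * (S * F) = 0 :=
    hP_oblique ▸ one_sub_mul_nonsing_inv_mul_mul_self (hgram ▸ hinv)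
  calc S *ᵥ (C - F *ᵥ xplus) = P *ᵥ (S *ᵥ C) := by
        simp only [hxplus, hP, ← hSS, Matrix.sub_mul, Matrix.one_mul, mulVec_sub, sub_mulVec,
          mulVec_mulVec, Matrix.mul_assoc]
    _ = P *ᵥ (S *ᵥ (C - F *ᵥ x)) := by
        rw [mulVec_sub, mulVec_sub, mulVec_mulVec (M := S) (N := F),
          mulVec_mulVec (M := P) (N := S * F), hPSF, zero_mulVec, sub_zero]

theorem airls_residual_projection {M n : ℕ} (F : Matrix (Fin M) (Fin n) ℝ)
    (W S : Matrix (Fin M) (Fin M) ℝ) (hW : W.PosDef)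
    (hinv : IsUnit (Fᵀ * W * F))
    (hS : S.PosSemidef) (hSS : S * S = W)
    (C : Fin M → ℝ) (x : Fin n → ℝ)
    (xplus : Fin n → ℝ) (hxplus : xplus = ((Fᵀ * W * F)⁻¹ * Fᵀ * W).mulVec C)
    (P : Matrix (Fin M) (Fin M) ℝ)
    (hP : P = (1 : Matrix (Fin M) (Fin M) ℝ) - S * F * (Fᵀ * W * F)⁻¹ * Fᵀ * S) :
    S.mulVec (C - F.mulVec xplus) = P.mulVec (S.mulVec (C - F.mulVec x)) :=
  airls_residual_projection_general F W S hinv hSS C x xplus hxplus P hP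
end

section
/- Let M, n be natural numbers, F a real M×n matrix, C ∈ ℝ^M, α > 0 a real number, q̄ > 0 a real number, and for each h ∈ Fin M let q_h be a real number with 0 < q_h ≤ q̄. For y ∈ ℝ^n write r_h(y) = (C − F·y)_h, and let W(x) be the M×M diagonal matrix with diagonal entries q_h·(r_h(x)² + α)^(q_h/q̄ − 1). Fix x ∈ ℝ^n such that Fᵀ·W(x)·F is invertible, and set x⁺ = (Fᵀ·W(x)·F)⁻¹·Fᵀ·W(x)·C. Then Σ_h (r_h(x⁺)² + α)^(q_h/q̄) ≤ Σ_h (r_h(x)² + α)^(q_h/q̄). -/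
/-!
Each summand `t ↦ t ^ (q_h / q̄)` is concave on `(0, ∞)`, so it lies below its tangent line at
`t = r_h(x)² + α`. Summing, `Ĝ(x⁺) - Ĝ(x)` is at most `1/q̄` times the change of the
quadratic `Σ_h W(x)_hh · r_h(·)²` from `x` to `x⁺`, and that change is `≤ 0` because `x⁺`
solves the normal equations of this weighted least-squares problem.
-/

open Matrix Real Finset

lemma Real.rpow_le_rpow_add_mul_sub {a b p : ℝ} (ha : 0 < a) (hb : 0 ≤ b) (hp₀ : 0 ≤ p)
    (hp₁ : p ≤ 1) : b ^ p ≤ a ^ p + p * a ^ (p - 1) * (b - a) := by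
  have hs : -1 ≤ b / a - 1 := by linarith [div_nonneg hb ha.le]
  have bernoulli := rpow_one_add_le_one_add_mul_self hs hp₀ hp₁
  rw [add_sub_cancel, div_rpow hb ha.le] at bernoulli
  have hap : 0 < a ^ p := rpow_pos_of_pos ha p
  calc b ^ p = a ^ p * (b ^ p / a ^ p) := by field_simp
    _ ≤ a ^ p * (1 + p * (b / a - 1)) := by gcongr
    _ = a ^ p + p * (a ^ p / a) * (b - a) := by field_simp
    _ = a ^ p + p * a ^ (p - 1) * (b - a) := by rw [rpow_sub_one ha.ne']

lemma sum_rpow_le_of_sum_mul_le {ι : Type*} (s : Finset ι) {a b q : ι → ℝ} {qbar : ℝ}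
    (hqbar : 0 < qbar) (ha : ∀ i, 0 < a i) (hb : ∀ i, 0 ≤ b i) (hq : ∀ i, 0 ≤ q i)
    (hqle : ∀ i, q i ≤ qbar)
    (hmm : ∑ i ∈ s, q i * a i ^ (q i / qbar - 1) * b i ≤
      ∑ i ∈ s, q i * a i ^ (q i / qbar - 1) * a i) :
    ∑ i ∈ s, b i ^ (q i / qbar) ≤ ∑ i ∈ s, a i ^ (q i / qbar) := by
  calc ∑ i ∈ s, b i ^ (q i / qbar)
      ≤ ∑ i ∈ s, (a i ^ (q i / qbar) + q i / qbar * a i ^ (q i / qbar - 1) * (b i - a i)) :=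
        sum_le_sum fun i _ => rpow_le_rpow_add_mul_sub (ha i) (hb i)
          (div_nonneg (hq i) hqbar.le) ((div_le_one hqbar).mpr (hqle i))
    _ = ∑ i ∈ s, a i ^ (q i / qbar) + qbar⁻¹ * (∑ i ∈ s, q i * a i ^ (q i / qbar - 1) * b i -
          ∑ i ∈ s, q i * a i ^ (q i / qbar - 1) * a i) := by
        rw [sum_add_distrib, ← sum_sub_distrib, mul_sum]
        congr 1
        refine sum_congr rfl fun i _ => ?_
        ring
    _ ≤ ∑ i ∈ s, a i ^ (q i / qbar) :=
        add_le_of_nonpos_right <| mul_nonpos_of_nonneg_of_nonpos (inv_nonneg.mpr hqbar.le)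
          (sub_nonpos.mpr hmm)

namespace Matrix

variable {m n : Type*} [Fintype m] [Fintype n]

lemma transpose_mul_mulVec_sub_mulVec_eq_zero [DecidableEq n] {K : Type*} [Field K]
    (F : Matrix m n K) (W : Matrix m m K) (C : m → K) (hinv : IsUnit (Fᵀ * W * F)) :
    (Fᵀ * W) *ᵥ (C - F *ᵥ (((Fᵀ * W * F)⁻¹ * Fᵀ * W) *ᵥ C)) = 0 := by
  have hproj : Fᵀ * W * F * ((Fᵀ * W * F)⁻¹ * Fᵀ * W) = Fᵀ * W := by
    simp only [← Matrix.mul_assoc]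
    rw [mul_nonsing_inv _ ((isUnit_iff_isUnit_det _).mp hinv), Matrix.one_mul]
  rw [mulVec_sub, mulVec_mulVec, mulVec_mulVec, hproj, sub_self]

lemma sum_mul_sq_le_of_normal_eq [DecidableEq m] (F : Matrix m n ℝ) (C : m → ℝ) {w : m → ℝ}
    (hw : ∀ i, 0 ≤ w i) {y : n → ℝ} (hy : (Fᵀ * diagonal w) *ᵥ (C - F *ᵥ y) = 0)
    (x : n → ℝ) :
    ∑ i, w i * (C - F *ᵥ y) i ^ 2 ≤ ∑ i, w i * (C - F *ᵥ x) i ^ 2 := by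
  set e := C - F *ᵥ y
  set u := F *ᵥ (x - y)
  have hx : C - F *ᵥ x = e - u := by simp only [e, u, mulVec_sub]; abel
  have hcross : ∑ i, w i * e i * u i = 0 := calc
    ∑ i, w i * e i * u i = (diagonal w *ᵥ e) ⬝ᵥ u := by simp [dotProduct, mulVec_diagonal]
    _ = (Fᵀ *ᵥ (diagonal w *ᵥ e)) ⬝ᵥ (x - y) := by rw [dotProduct_mulVec, mulVec_transpose]
    _ = 0 := by rw [mulVec_mulVec, hy, zero_dotProduct]
  have hexp : ∑ i, w i * (e - u) i ^ 2 =
      ∑ i, w i * e i ^ 2 - 2 * ∑ i, w i * e i * u i + ∑ i, w i * u i ^ 2 := by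
    rw [mul_sum, ← sum_sub_distrib, ← sum_add_distrib]
    refine sum_congr rfl fun i _ => ?_
    simp only [Pi.sub_apply]
    ring
  have hnn : 0 ≤ ∑ i, w i * u i ^ 2 := sum_nonneg fun i _ => mul_nonneg (hw i) (sq_nonneg _)
  rw [hx, hexp, hcross]
  linarith

end Matrix

theorem airls_single_block_descent (M n : ℕ) (F : Matrix (Fin M) (Fin n) ℝ)
    (C : Fin M → ℝ) (α qbar : ℝ) (hα : 0 < α) (hqbar : 0 < qbar)
    (q : Fin M → ℝ) (hq : ∀ h, 0 < q h) (hqle : ∀ h, q h ≤ qbar)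
    (r : (Fin n → ℝ) → Fin M → ℝ) (hr : ∀ y, r y = C - F.mulVec y)
    (Wt : (Fin n → ℝ) → Matrix (Fin M) (Fin M) ℝ)
    (hW : ∀ y, Wt y = Matrix.diagonal (fun h => q h * ((r y h) ^ 2 + α) ^ (q h / qbar - 1)))
    (x : Fin n → ℝ) (hinv : IsUnit (Fᵀ * Wt x * F))
    (xplus : Fin n → ℝ) (hxplus : xplus = ((Fᵀ * Wt x * F)⁻¹ * Fᵀ * Wt x).mulVec C) :
    ∑ h : Fin M, ((r xplus h) ^ 2 + α) ^ (q h / qbar) ≤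
      ∑ h : Fin M, ((r x h) ^ 2 + α) ^ (q h / qbar) := by
  have hnormal := transpose_mul_mulVec_sub_mulVec_eq_zero F (Wt x) C hinv
  rw [← hxplus, hW x] at hnormal
  have hls := sum_mul_sq_le_of_normal_eq F C
    (fun h => mul_nonneg (hq h).le (rpow_nonneg (by positivity) _)) hnormal x
  refine sum_rpow_le_of_sum_mul_le univ hqbar (fun h => by positivity) (fun h => by positivity)
    (fun h => (hq h).le) hqle ?_
  simp only [mul_add, sum_add_distrib, hr] at hls ⊢
  linarith
end

section
/- In the setting of the single-block AIRLS update — F a real M×n matrix, C ∈ ℝ^M, α > 0, q̄ > 0, real exponents with 0 < q_h < q̄ for all h ∈ Fin M, residuals r_h(y) = (C − F·y)_h, weights W(x) diagonal with entries q_h·(r_h(x)² + α)^(q_h/q̄ − 1), Fᵀ·W(x)·F invertible, and x⁺ = (Fᵀ·W(x)·F)⁻¹·Fᵀ·W(x)·C — if Σ_h (r_h(x⁺)² + α)^(q_h/q̄) = Σ_h (r_h(x)² + α)^(q_h/q̄), then r_h(x⁺)² = r_h(x)² for every h ∈ Fin M. -/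
open Matrix Real Finset

/-!
The update `x⁺` solves the weighted normal equations `Fᵀ W F x⁺ = Fᵀ W C`, so it minimises
`y ↦ ∑ w_h r_h(y)²` and in particular `∑ w_h r_h(x⁺)² ≤ ∑ w_h r_h(x)²`. Writing `u_h = r_h(x)² + α`,
`v_h = r_h(x⁺)² + α` and `θ_h = q_h / q̄`, the weight `w_h = q_h u_h^(θ_h - 1)` is `q̄` times the
derivative of `t ↦ t^θ_h` at `u_h`, so the descent says that the tangent-line increments
`∑ θ_h u_h^(θ_h - 1) (v_h - u_h)` are nonpositive. Since `t ↦ t^θ` is strictly concave for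
`0 < θ < 1`, any `v_h ≠ u_h` would then make `∑ v_h^θ_h < ∑ u_h^θ_h`.
-/

theorem rpow_lt_tangent_of_ne {u v θ : ℝ} (hu : 0 < u) (hv : 0 ≤ v) (hθ₀ : 0 < θ)
    (hθ₁ : θ < 1) (hvu : v ≠ u) :
    v ^ θ < u ^ θ + θ * u ^ (θ - 1) * (v - u) := by
  have hs : -1 ≤ v / u - 1 := by linarith [div_nonneg hv hu.le]
  have hs' : v / u - 1 ≠ 0 := by
    rwa [sub_ne_zero, Ne, div_eq_one_iff_eq hu.ne']
  have hbernoulli := rpow_one_add_lt_one_add_mul_self hs hs' hθ₀ hθ₁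
  rw [add_sub_cancel, div_rpow hv hu.le, div_lt_iff₀ (rpow_pos_of_pos hu θ)] at hbernoulli
  calc v ^ θ < (1 + θ * (v / u - 1)) * u ^ θ := hbernoulli
    _ = u ^ θ + θ * (u ^ θ / u) * (v - u) := by field_simp
    _ = u ^ θ + θ * u ^ (θ - 1) * (v - u) := by rw [rpow_sub_one hu.ne']

theorem rpow_le_tangent {u v θ : ℝ} (hu : 0 < u) (hv : 0 ≤ v) (hθ₀ : 0 < θ) (hθ₁ : θ < 1) :
    v ^ θ ≤ u ^ θ + θ * u ^ (θ - 1) * (v - u) := by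
  rcases eq_or_ne v u with rfl | hvu
  · simp
  · exact (rpow_lt_tangent_of_ne hu hv hθ₀ hθ₁ hvu).le

theorem eq_of_sum_rpow_le_of_sum_tangent_nonpos {ι : Type*} [Fintype ι] {u v θ : ι → ℝ}
    (hu : ∀ i, 0 < u i) (hv : ∀ i, 0 ≤ v i) (hθ₀ : ∀ i, 0 < θ i) (hθ₁ : ∀ i, θ i < 1)
    (htangent : ∑ i, θ i * u i ^ (θ i - 1) * (v i - u i) ≤ 0)
    (hsum : ∑ i, u i ^ θ i ≤ ∑ i, v i ^ θ i) :
    v = u := by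
  by_contra hvu
  obtain ⟨i₀, hi₀⟩ := Function.ne_iff.mp hvu
  have hlt : ∑ i, v i ^ θ i < ∑ i, (u i ^ θ i + θ i * u i ^ (θ i - 1) * (v i - u i)) :=
    sum_lt_sum (fun i _ => rpow_le_tangent (hu i) (hv i) (hθ₀ i) (hθ₁ i))
      ⟨i₀, mem_univ _, rpow_lt_tangent_of_ne (hu i₀) (hv i₀) (hθ₀ i₀) (hθ₁ i₀) hi₀⟩
  rw [sum_add_distrib] at hlt
  linarith

section WeightedLeastSquares

variable {ι κ : Type*} [Fintype ι] [Fintype κ]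

theorem mulVec_eq_of_eq_inv_mul_mulVec [DecidableEq κ] {A : Matrix κ κ ℝ} {B : Matrix κ ι ℝ}
    {C : ι → ℝ} {x : κ → ℝ} (hA : IsUnit A) (hx : x = (A⁻¹ * B) *ᵥ C) : A *ᵥ x = B *ᵥ C := by
  rw [hx, mulVec_mulVec, mul_nonsing_inv_cancel_left _ _ ((isUnit_iff_isUnit_det A).mp hA)]

theorem sum_mul_sq_sub_mulVec_eq_of_normal_eq [DecidableEq ι] {F : Matrix ι κ ℝ} {w C : ι → ℝ}
    {xhat : κ → ℝ}
    (hnormal : (Fᵀ * diagonal w * F) *ᵥ xhat = (Fᵀ * diagonal w) *ᵥ C) (y : κ → ℝ) :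
    ∑ i, w i * (C - F *ᵥ y) i ^ 2 =
      ∑ i, w i * (C - F *ᵥ xhat) i ^ 2 + ∑ i, w i * (F *ᵥ (xhat - y)) i ^ 2 := by
  set R := C - F *ᵥ xhat
  set d := xhat - y
  have horth : (Fᵀ * diagonal w) *ᵥ R = 0 := by
    rw [mulVec_sub, mulVec_mulVec, hnormal, sub_self]
  have hcross : ∑ i, w i * R i * (F *ᵥ d) i = 0 := by
    calc ∑ i, w i * R i * (F *ᵥ d) i = (diagonal w *ᵥ R) ⬝ᵥ (F *ᵥ d) := by
          simp only [dotProduct, mulVec_diagonal]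
      _ = ((Fᵀ * diagonal w) *ᵥ R) ⬝ᵥ d := by
          rw [dotProduct_mulVec, ← mulVec_transpose, mulVec_mulVec]
      _ = 0 := by rw [horth, zero_dotProduct]
  have hsplit : C - F *ᵥ y = R + F *ᵥ d := by
    simp only [R, d, mulVec_sub]; abel
  calc ∑ i, w i * (C - F *ᵥ y) i ^ 2
      = ∑ i, (w i * R i ^ 2 + 2 * (w i * R i * (F *ᵥ d) i) + w i * (F *ᵥ d) i ^ 2) := by
        simp only [hsplit, Pi.add_apply]; congr! 1 with i; ring
    _ = _ := by rw [sum_add_distrib, sum_add_distrib, ← mul_sum, hcross, mul_zero, add_zero]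

theorem sum_mul_sq_sub_mulVec_le_of_normal_eq [DecidableEq ι] {F : Matrix ι κ ℝ} {w C : ι → ℝ}
    {xhat : κ → ℝ} (hw : ∀ i, 0 ≤ w i)
    (hnormal : (Fᵀ * diagonal w * F) *ᵥ xhat = (Fᵀ * diagonal w) *ᵥ C) (y : κ → ℝ) :
    ∑ i, w i * (C - F *ᵥ xhat) i ^ 2 ≤ ∑ i, w i * (C - F *ᵥ y) i ^ 2 := by
  rw [sum_mul_sq_sub_mulVec_eq_of_normal_eq hnormal y]
  exact le_add_of_nonneg_right (sum_nonneg fun i _ => mul_nonneg (hw i) (sq_nonneg _))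

end WeightedLeastSquares

theorem airls_descent_equality_case (M n : ℕ) (F : Matrix (Fin M) (Fin n) ℝ)
    (C : Fin M → ℝ) (α qbar : ℝ) (hα : 0 < α) (hqbar : 0 < qbar)
    (q : Fin M → ℝ) (hq : ∀ h, 0 < q h) (hqlt : ∀ h, q h < qbar)
    (r : (Fin n → ℝ) → Fin M → ℝ) (hr : ∀ y, r y = C - F.mulVec y)
    (Wt : (Fin n → ℝ) → Matrix (Fin M) (Fin M) ℝ)
    (hW : ∀ y, Wt y = Matrix.diagonal (fun h => q h * ((r y h) ^ 2 + α) ^ (q h / qbar - 1)))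
    (x : Fin n → ℝ) (hinv : IsUnit (Fᵀ * Wt x * F))
    (xplus : Fin n → ℝ) (hxplus : xplus = ((Fᵀ * Wt x * F)⁻¹ * Fᵀ * Wt x).mulVec C)
    (heq : ∑ h : Fin M, ((r xplus h) ^ 2 + α) ^ (q h / qbar) =
      ∑ h : Fin M, ((r x h) ^ 2 + α) ^ (q h / qbar)) :
    ∀ h : Fin M, (r xplus h) ^ 2 = (r x h) ^ 2 := by
  set w := fun h => q h * ((r x h) ^ 2 + α) ^ (q h / qbar - 1)
  have hw : ∀ h, 0 ≤ w h := fun h => mul_nonneg (hq h).le (by positivity)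
  have hnormal : (Fᵀ * diagonal w * F) *ᵥ xplus = (Fᵀ * diagonal w) *ᵥ C := by
    rw [← hW]
    exact mulVec_eq_of_eq_inv_mul_mulVec hinv (by rw [hxplus, Matrix.mul_assoc])
  have hdescent := sum_mul_sq_sub_mulVec_le_of_normal_eq hw hnormal x
  rw [← hr, ← hr] at hdescent
  have htangent_eq : ∑ h, q h / qbar * ((r x h) ^ 2 + α) ^ (q h / qbar - 1) *
      ((r xplus h) ^ 2 + α - ((r x h) ^ 2 + α)) =
      qbar⁻¹ * (∑ h, w h * (r xplus h) ^ 2 - ∑ h, w h * (r x h) ^ 2) := by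
    rw [← sum_sub_distrib, mul_sum]
    congr! 1 with h
    ring
  have hvu := eq_of_sum_rpow_le_of_sum_tangent_nonpos (fun h => by positivity)
    (fun h => by positivity) (fun h => div_pos (hq h) hqbar)
    (fun h => (div_lt_one hqbar).mpr (hqlt h))
    (htangent_eq.trans_le (mul_nonpos_of_nonneg_of_nonpos (inv_nonneg.mpr hqbar.le)
      (sub_nonpos.mpr hdescent))) heq.ge
  intro h
  simpa using congrFun hvu h
end

section
/- Let M, n be natural numbers, F a real M×n matrix, C ∈ ℝ^M, α > 0 a real number, q̄ > 0 a real number, and for each h ∈ Fin M let q_h be a real number with 0 < q_h ≤ q̄. For y ∈ ℝ^n write r_h(y) = (C − F·y)_h, let W(y) be the M×M diagonal matrix with diagonal entries q_h·(r_h(y)² + α)^(q_h/q̄ − 1), and define Ĝ(y) = Σ_h (r_h(y)² + α)^(q_h/q̄). Suppose x̂ ∈ ℝ^n satisfies Fᵀ·W(x̂)·F invertible and x̂ = (Fᵀ·W(x̂)·F)⁻¹·Fᵀ·W(x̂)·C. Then the Fréchet derivative of Ĝ at x̂ is zero. -/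
/-!
Differentiating `Ĝ` term by term gives `fderiv Ĝ x = -(2 / q̄) ⟪Fᵀ W(x) r(x), ·⟫`, because
`d/dt (t² + α)^(q/q̄) = (2 / q̄) · q (t² + α)^(q/q̄ - 1) · t` is exactly `(2 / q̄)` times the IRLS
weight times `t`. A fixed point of the update satisfies the weighted normal equations
`Fᵀ W(x̂) (C - F x̂) = 0`, so the derivative vanishes there.
-/

open Matrix Finset

theorem mulVec_sub_mulVec_eq_zero_of_eq_nonsing_inv_mul {R m n : Type*} [CommRing R]
    [Fintype m] [Fintype n] [DecidableEq n] {B : Matrix n m R} {F : Matrix m n R}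
    (hBF : IsUnit (B * F)) {C : m → R} {x : n → R} (hx : x = ((B * F)⁻¹ * B) *ᵥ C) :
    B *ᵥ (C - F *ᵥ x) = 0 := by
  rw [mulVec_sub, mulVec_mulVec, hx, mulVec_mulVec, ← Matrix.mul_assoc,
    mul_nonsing_inv _ ((isUnit_iff_isUnit_det _).mp hBF), Matrix.one_mul, sub_self]

theorem hasFDerivAt_sum_rpow_sq_add_residual {m n : Type*} [Fintype m] [Fintype n]
    (F : Matrix m n ℝ) (C : m → ℝ) (α : ℝ) (p : m → ℝ) {x : n → ℝ}
    (hx : ∀ h, (C - F *ᵥ x) h ^ 2 + α ≠ 0) :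
    HasFDerivAt (fun y => ∑ h, ((C - F *ᵥ y) h ^ 2 + α) ^ p h)
      ((-2 : ℝ) • (dotProductBilin ℝ ℝ (Fᵀ *ᵥ fun h =>
        p h * ((C - F *ᵥ x) h ^ 2 + α) ^ (p h - 1) * (C - F *ᵥ x) h)).toContinuousLinearMap) x := by
  set L := F.mulVecLin.toContinuousLinearMap
  have hres : ∀ h, HasFDerivAt (fun y => (C - F *ᵥ y) h) (-(ContinuousLinearMap.proj h ∘L L)) x :=
    fun h => ((hasFDerivAt_const (C h) x).sub
      (ContinuousLinearMap.proj h ∘L L).hasFDerivAt).congr_fderiv (zero_sub _)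
  have hterm := fun h => (((hres h).pow 2).add_const α).rpow_const (p := p h) (Or.inl (hx h))
  refine (HasFDerivAt.fun_sum fun h (_ : h ∈ univ) => hterm h).congr_fderiv ?_
  ext v
  rw [_root_.smul_apply, LinearMap.coe_toContinuousLinearMap', dotProductBilin_apply_apply,
    mulVec_transpose, ← dotProduct_mulVec]
  simp only [Pi.sub_apply, Nat.add_one_sub_one, pow_one, nsmul_eq_mul, Nat.cast_ofNat, smul_neg,
    sum_neg_distrib, _root_.neg_apply, _root_.sum_apply, _root_.smul_apply,
    ContinuousLinearMap.comp_apply, LinearMap.coe_toContinuousLinearMap', mulVecBilin_apply,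
    ContinuousLinearMap.proj_apply, smul_eq_mul, dotProduct, mul_sum, neg_mul, neg_inj, L]
  exact sum_congr rfl fun h _ => by ring

theorem airls_fixed_point_is_critical_general (M n : ℕ) (F : Matrix (Fin M) (Fin n) ℝ)
    (C : Fin M → ℝ) (α qbar : ℝ) (hα : 0 < α)
    (q : Fin M → ℝ)
    (r : (Fin n → ℝ) → Fin M → ℝ) (hr : ∀ y, r y = C - F.mulVec y)
    (Wt : (Fin n → ℝ) → Matrix (Fin M) (Fin M) ℝ)
    (hW : ∀ y, Wt y = Matrix.diagonal (fun h => q h * ((r y h) ^ 2 + α) ^ (q h / qbar - 1)))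
    (Ghat : (Fin n → ℝ) → ℝ)
    (hGhat : ∀ y, Ghat y = ∑ h : Fin M, ((r y h) ^ 2 + α) ^ (q h / qbar))
    (xhat : Fin n → ℝ) (hinv : IsUnit (Fᵀ * Wt xhat * F))
    (hfix : xhat = ((Fᵀ * Wt xhat * F)⁻¹ * Fᵀ * Wt xhat).mulVec C) :
    fderiv ℝ Ghat xhat = 0 := by
  have hGhat_eq : Ghat = fun y => ∑ h, ((C - F *ᵥ y) h ^ 2 + α) ^ (q h / qbar) :=
    funext fun y => by rw [hGhat, hr]
  have hnormal : (Fᵀ * Wt xhat) *ᵥ r xhat = 0 := by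
    rw [hr]
    exact mulVec_sub_mulVec_eq_zero_of_eq_nonsing_inv_mul hinv
      (by simpa only [Matrix.mul_assoc] using hfix)
  have hweighted : (fun h => q h / qbar * (r xhat h ^ 2 + α) ^ (q h / qbar - 1) * r xhat h)
      = qbar⁻¹ • (Wt xhat *ᵥ r xhat) := by
    ext h
    rw [hW, Pi.smul_apply, mulVec_diagonal, smul_eq_mul]
    ring
  have hderiv := hasFDerivAt_sum_rpow_sq_add_residual F C α (fun h => q h / qbar)
    (x := xhat) fun h => by positivity
  rw [hGhat_eq, hderiv.fderiv, ← hr, hweighted, mulVec_smul, mulVec_mulVec, hnormal,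
    smul_zero, map_zero, map_zero, smul_zero]

theorem airls_fixed_point_is_critical (M n : ℕ) (F : Matrix (Fin M) (Fin n) ℝ)
    (C : Fin M → ℝ) (α qbar : ℝ) (hα : 0 < α) (hqbar : 0 < qbar)
    (q : Fin M → ℝ) (hq : ∀ h, 0 < q h) (hqle : ∀ h, q h ≤ qbar)
    (r : (Fin n → ℝ) → Fin M → ℝ) (hr : ∀ y, r y = C - F.mulVec y)
    (Wt : (Fin n → ℝ) → Matrix (Fin M) (Fin M) ℝ)
    (hW : ∀ y, Wt y = Matrix.diagonal (fun h => q h * ((r y h) ^ 2 + α) ^ (q h / qbar - 1)))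
    (Ghat : (Fin n → ℝ) → ℝ)
    (hGhat : ∀ y, Ghat y = ∑ h : Fin M, ((r y h) ^ 2 + α) ^ (q h / qbar))
    (xhat : Fin n → ℝ) (hinv : IsUnit (Fᵀ * Wt xhat * F))
    (hfix : xhat = ((Fᵀ * Wt xhat * F)⁻¹ * Fᵀ * Wt xhat).mulVec C) :
    fderiv ℝ Ghat xhat = 0 :=
  airls_fixed_point_is_critical_general M n F C α qbar hα q r hr Wt hW Ghat hGhat xhat hinv hfix
end
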